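/- arXiv:1504.03129 — 2 statements merged into one kernel-verified Lean document; each statement's English description precedes it below -/
import Mathlib

section
/- Let V ⊂ Z^{|V|} be a semipositive circular subset such that v·v ≤ -2 for each v ∈ V and ∑_{v∈C}(v·v+2) < -1 for each connected component C of V, and let E be a canonical basis adapted to V. Then for each e ∈ E not in the image of the coefficient map there exists u ∈ V such that u·u = -2, u·e = 1, and u is the only element of V with u·e ≠ 0. -/
open Finset

/-- The standard negative definite bilinear form on `ℤ^N`:
`x·y = -∑ i, x i * y i`. -/
def negForm (N : ℕ) (u v : Fin N → ℤ) : ℤ := -∑ i, u i * v i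

/-- A canonical basis of `ℤ^N`: a set of `N` vectors with `e·e = -1` and
distinct elements pairwise orthogonal. -/
def IsCanonicalBasis (N : ℕ) (E : Finset (Fin N → ℤ)) : Prop :=
  E.card = N ∧ (∀ e ∈ E, negForm N e e = -1) ∧
    ∀ e ∈ E, ∀ f ∈ E, e ≠ f → negForm N e f = 0

/-- The equivalence relation on `ℤ^N` generated by `u ~ v` iff
`u, v ∈ V` and `u·v ≠ 0`. -/
def Conn (N : ℕ) (V : Finset (Fin N → ℤ)) : (Fin N → ℤ) → (Fin N → ℤ) → Prop :=
  Relation.EqvGen fun u v => u ∈ V ∧ v ∈ V ∧ negForm N u v ≠ 0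

open scoped Classical in
/-- The connected component of `v` in `V`. -/
noncomputable def compOf (N : ℕ) (V : Finset (Fin N → ℤ)) (v : Fin N → ℤ) :
    Finset (Fin N → ℤ) :=
  V.filter fun u => Conn N V u v

/-- A circular subset of `ℤ^N`. -/
def IsCircular (N : ℕ) (V : Finset (Fin N → ℤ)) : Prop :=
  (∀ v ∈ V, 3 ≤ (compOf N V v).card) ∧
  (∀ u ∈ V, ∀ v ∈ V, u ≠ v →
    negForm N u v = -1 ∨ negForm N u v = 0 ∨ negForm N u v = 1) ∧
  (∀ v ∈ V,
    (V.filter fun u => u ≠ v ∧ (negForm N u v = 1 ∨ negForm N u v = -1)).card = 2)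

/-- `E` is a canonical basis adapted to `V`:  `∑_{v ∈ V} v = -∑_{e ∈ E} e`. -/
def IsAdaptedBasis (N : ℕ) (E V : Finset (Fin N → ℤ)) : Prop :=
  IsCanonicalBasis N E ∧ (∑ v ∈ V, v) = -∑ e ∈ E, e

open scoped Classical in
/-- A semipositive circular subset: each connected component contains exactly one
(unordered) pair of distinct vectors `u, v` with `u·v = -1`. -/
def IsSemipositive (N : ℕ) (V : Finset (Fin N → ℤ)) : Prop :=
  IsCircular N V ∧ ∀ v₀ ∈ V,
    (((compOf N V v₀) ×ˢ (compOf N V v₀)).filter fun p =>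
      p.1 ≠ p.2 ∧ negForm N p.1 p.2 = -1).card = 2

/-- A positive circular subset: `u·v ≥ 0` for all distinct `u, v ∈ V`. -/
def IsPositive (N : ℕ) (V : Finset (Fin N → ℤ)) : Prop :=
  IsCircular N V ∧ ∀ u ∈ V, ∀ v ∈ V, u ≠ v → 0 ≤ negForm N u v

/-- A single blowup of a string of nonnegative integers. -/
inductive IsBlowup : List ℕ → List ℕ → Prop
  | left (a b : ℕ) (m : List ℕ) :
      IsBlowup (a :: (m ++ [b])) (1 :: (a + 1) :: (m ++ [b + 1]))
  | middle (a b : ℕ) (p s : List ℕ) :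
      IsBlowup (p ++ a :: b :: s) (p ++ (a + 1) :: 1 :: (b + 1) :: s)
  | right (a b : ℕ) (m : List ℕ) :
      IsBlowup (a :: (m ++ [b])) ((a + 1) :: (m ++ [b + 1, 1]))

/-- An iterated blowup of `(0,0)`. -/
def IsIteratedBlowup (s : List ℕ) : Prop :=
  Relation.ReflTransGen IsBlowup [0, 0] s

/-- A `(-2)`-expansion of a string of negative integers. -/
inductive IsNeg2Expansion : List ℤ → List ℤ → Prop
  | first (l : List ℤ) (a : ℤ) :
      IsNeg2Expansion (-2 :: (l ++ [a])) (-2 :: -2 :: (l ++ [a - 1]))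
  | second (a : ℤ) (l : List ℤ) :
      IsNeg2Expansion (-2 :: a :: l) (-2 :: (a - 1) :: (l ++ [-2]))

/-- A cyclic listing of (the elements of) a connected component `C` of a circular
subset: a cyclically indexed enumeration of `C` in which consecutive elements
pair to `±1`. -/
def IsCyclicListing (N : ℕ) (C : Finset (Fin N → ℤ)) (m : ℕ)
    (w : ZMod m → (Fin N → ℤ)) : Prop :=
  C.card = m ∧ Function.Injective w ∧ (∀ i, w i ∈ C) ∧ (∀ c ∈ C, ∃ i, w i = c) ∧
    ∀ i : ZMod m, negForm N (w i) (w (i + 1)) = 1 ∨ negForm N (w i) (w (i + 1)) = -1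

/-- The index in the cyclic string at which the `i`-th block starts. -/
def blockStart {t : ℕ} (y : Fin t → ℕ) (i : Fin t) : ℕ := ∑ i' ∈ Finset.Iio i, y i'

/-- The string of squares `(-x₁-2, -2,…,-2, …, -xₜ-2, -2,…,-2)` of the lattice
`Λ_Γ`, as a function on `Fin n` (where `n = ∑ yᵢ`). -/
def sqOf {t : ℕ} (x y : Fin t → ℕ) (n : ℕ) (j : Fin n) : ℤ :=
  -2 - ∑ i : Fin t, if (j : ℕ) = blockStart y i then (x i : ℤ) else 0

/-- The Gram matrix of the lattice `Λ_Γ`: diagonal given by `sq`, consecutive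
vertices pair to `1`, the last and first vertices pair to `(-1)^d`, all other
pairs are orthogonal. -/
def gramOf (n : ℕ) (sq : Fin n → ℤ) (d : ℕ) (i j : Fin n) : ℤ :=
  if i = j then sq i
  else if (j : ℕ) = (i : ℕ) + 1 ∨ (i : ℕ) = (j : ℕ) + 1 then 1
  else if ((i : ℕ) = 0 ∧ (j : ℕ) = n - 1) ∨ ((j : ℕ) = 0 ∧ (i : ℕ) = n - 1)
    then (-1) ^ d
  else 0


/-!
Write `c_f = v·f` for the coordinates of `v ∈ V` in `E`. Parseval and adaptedness give
`∑_f (c_f² - c_f) = W·v - v·v`, and semipositivity makes this `0` or `2`. Hence, for `e` outside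
the image of the coefficient map, every `v·e` lies in `{0, 1}`; since `∑_v v·e = -e·e = 1`, exactly
one `u ∈ V` meets `e`, and `u·e = 1`.

If `u·u ≤ -3`, replacing `u` by `u + e` yields `|V| = N` vectors in `e^⊥`, with the same pairings
between distinct elements and all squares `≤ -2`. Such vectors are linearly independent: an
isotropic combination `∑ x_v v` forces `x_q = (v·q) x_v` along every edge, so the sign of `x` flips
exactly across the `(-1)`-edges, which is impossible on a cycle carrying a single `(-1)`-edge.
This contradicts `rank e^⊥ = N - 1`.
-/

section NegForm

variable {N : ℕ}

lemma negForm_eq_neg_dotProduct (u v : Fin N → ℤ) : negForm N u v = -dotProduct u v := rfl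

lemma negForm_comm (u v : Fin N → ℤ) : negForm N u v = negForm N v u := by
  rw [negForm_eq_neg_dotProduct, dotProduct_comm, ← negForm_eq_neg_dotProduct]

lemma negForm_add_left (u v w : Fin N → ℤ) :
    negForm N (u + v) w = negForm N u w + negForm N v w := by
  simp only [negForm_eq_neg_dotProduct, add_dotProduct, neg_add]

lemma negForm_add_self (u v : Fin N → ℤ) :
    negForm N (u + v) (u + v) = negForm N u u + 2 * negForm N u v + negForm N v v := by
  rw [negForm_add_left, negForm_comm u, negForm_comm v, negForm_add_left, negForm_add_left,
    negForm_comm v u]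
  ring

lemma negForm_neg_left (u w : Fin N → ℤ) : negForm N (-u) w = -negForm N u w := by
  simp only [negForm_eq_neg_dotProduct, neg_dotProduct]

lemma negForm_sum_left {ι : Type*} (s : Finset ι) (u : ι → Fin N → ℤ) (w : Fin N → ℤ) :
    negForm N (∑ i ∈ s, u i) w = ∑ i ∈ s, negForm N (u i) w := by
  simp only [negForm_eq_neg_dotProduct, sum_dotProduct, sum_neg_distrib]

lemma negForm_single_right (u : Fin N → ℤ) (j : Fin N) (c : ℤ) :
    negForm N u (Pi.single j c) = -(u j * c) := by
  rw [negForm_eq_neg_dotProduct, dotProduct_single]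

lemma eq_single_of_negForm_self_eq_neg_one {f : Fin N → ℤ} (hf : negForm N f f = -1) :
    ∃ j c, (c = 1 ∨ c = -1) ∧ f = Pi.single j c := by
  have hsum : ∑ i, f i * f i = 1 := by unfold negForm at hf; linarith
  obtain ⟨j, hj⟩ : ∃ j, f j ≠ 0 := by
    by_contra! h
    simp [h] at hsum
  have hrest : ∑ i ∈ univ.erase j, f i * f i = 1 - f j * f j := by
    rw [← hsum, ← add_sum_erase _ _ (mem_univ j)]; ring
  have hrest_nonneg : 0 ≤ ∑ i ∈ univ.erase j, f i * f i :=
    sum_nonneg fun i _ => mul_self_nonneg (f i)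
  have hfj : f j * f j = 1 := by nlinarith [mul_self_pos.mpr hj]
  refine ⟨j, f j, Int.isUnit_iff.mp (IsUnit.of_mul_eq_one _ hfj), funext fun i => ?_⟩
  rcases eq_or_ne i j with rfl | hij
  · simp
  · rw [Pi.single_eq_of_ne hij]
    have h0 := (sum_eq_zero_iff_of_nonneg fun i _ => mul_self_nonneg (f i)).mp
      (by rw [hrest, hfj, sub_self]) i (mem_erase.mpr ⟨hij, mem_univ i⟩)
    exact mul_self_eq_zero.mp h0

end NegForm

section Basis

variable {N : ℕ} {E V : Finset (Fin N → ℤ)}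

theorem IsCanonicalBasis.sum_negForm_mul_negForm (hE : IsCanonicalBasis N E)
    (v z : Fin N → ℤ) : ∑ f ∈ E, negForm N v f * negForm N z f = -negForm N v z := by
  obtain ⟨hcard, hnorm, horth⟩ := hE
  have hshape : ∀ f ∈ E, ∃ j c, (c = 1 ∨ c = -1) ∧ f = Pi.single j c :=
    fun f hf => eq_single_of_negForm_self_eq_neg_one (hnorm f hf)
  choose J c hc hJ using hshape
  have hinj : ∀ f hf g hg, J f hf = J g hg → f = g := by
    intro f hf g hg hfg
    by_contra hne
    have h := horth f hf g hg hne
    rw [hJ g hg, negForm_single_right, hJ f hf, ← hfg, Pi.single_eq_same] at h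
    rcases hc f hf with h1 | h1 <;> rcases hc g hg with h2 | h2 <;> simp [h1, h2] at h
  have hsurj : ∀ j ∈ univ, ∃ f hf, J f hf = j := fun j hj => by
    obtain ⟨f, hf, rfl⟩ := surj_on_of_inj_on_of_card_le J (fun _ _ => mem_univ _)
      (fun f g hf hg => hinj f hf g hg) (by simp [hcard]) j hj
    exact ⟨f, hf, rfl⟩
  rw [negForm, neg_neg]
  refine sum_bij J (fun _ _ => mem_univ _) hinj hsurj fun f hf => ?_
  obtain ⟨j, hj⟩ : ∃ j, J f hf = j := ⟨_, rfl⟩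
  have hfj : f = Pi.single j (c f hf) := hj ▸ hJ f hf
  rcases hc f hf with h | h <;>
    rw [hj, hfj, negForm_single_right, negForm_single_right, h] <;> ring

theorem IsAdaptedBasis.sum_negForm_basis (hE : IsAdaptedBasis N E V) (v : Fin N → ℤ) :
    ∑ f ∈ E, negForm N v f = -∑ u ∈ V, negForm N u v := by
  have hsumE : ∑ f ∈ E, f = -∑ u ∈ V, u := by rw [hE.2, neg_neg]
  simp_rw [negForm_comm v, ← negForm_sum_left, hsumE, negForm_neg_left]

theorem IsAdaptedBasis.sum_negForm_eq_one (hE : IsAdaptedBasis N E V) {e : Fin N → ℤ}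
    (he : e ∈ E) : ∑ v ∈ V, negForm N v e = 1 := by
  have horth : ∀ f ∈ E, f ≠ e → negForm N f e = 0 := fun f hf hfe => hE.1.2.2 f hf e he hfe
  rw [← negForm_sum_left, hE.2, negForm_neg_left, negForm_sum_left,
    sum_eq_single e horth (absurd he), hE.1.2.1 e he, neg_neg]

end Basis

section Circular

variable {N : ℕ} {V : Finset (Fin N → ℤ)}

def neighbours (N : ℕ) (V : Finset (Fin N → ℤ)) (v : Fin N → ℤ) : Finset (Fin N → ℤ) :=
  V.filter fun u => u ≠ v ∧ (negForm N u v = 1 ∨ negForm N u v = -1)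

lemma mem_neighbours {v u : Fin N → ℤ} :
    u ∈ neighbours N V v ↔ u ∈ V ∧ u ≠ v ∧ (negForm N u v = 1 ∨ negForm N u v = -1) :=
  mem_filter

lemma IsCircular.card_neighbours (hV : IsCircular N V) {v : Fin N → ℤ} (hv : v ∈ V) :
    (neighbours N V v).card = 2 :=
  hV.2.2 v hv

lemma mem_compOf_self {v : Fin N → ℤ} (hv : v ∈ V) : v ∈ compOf N V v := by
  classical
  exact mem_filter.mpr ⟨hv, Relation.EqvGen.refl v⟩

lemma mem_compOf_of_negForm_ne_zero {v₀ u v : Fin N → ℤ} (hu : u ∈ V)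
    (hv : v ∈ compOf N V v₀) (huv : negForm N u v ≠ 0) : u ∈ compOf N V v₀ := by
  classical
  obtain ⟨hvV, hconn⟩ := mem_filter.mp hv
  exact mem_filter.mpr ⟨hu, (Relation.EqvGen.rel _ _ ⟨hu, hvV, huv⟩).trans _ _ _ hconn⟩

theorem IsCircular.sum_erase_eq_sum_neighbours {M : Type*} [AddCommMonoid M]
    (hV : IsCircular N V) {v : Fin N → ℤ} (hv : v ∈ V) {f : (Fin N → ℤ) → M}
    (hf : ∀ u, negForm N u v = 0 → f u = 0) :
    ∑ u ∈ V.erase v, f u = ∑ u ∈ neighbours N V v, f u := by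
  refine (sum_subset (fun u hu => ?_) fun u hu hnot => ?_).symm
  · obtain ⟨huV, huv, -⟩ := mem_neighbours.mp hu
    exact mem_erase.mpr ⟨huv, huV⟩
  · obtain ⟨huv, huV⟩ := mem_erase.mp hu
    rcases hV.2.1 u huV v hv huv with h | h | h
    · exact absurd (mem_neighbours.mpr ⟨huV, huv, Or.inr h⟩) hnot
    · exact hf u h
    · exact absurd (mem_neighbours.mpr ⟨huV, huv, Or.inl h⟩) hnot

theorem IsCircular.sum_erase_sq_negForm (hV : IsCircular N V) {v : Fin N → ℤ} (hv : v ∈ V) :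
    ∑ u ∈ V.erase v, negForm N u v ^ 2 = 2 := by
  rw [hV.sum_erase_eq_sum_neighbours hv fun u h => by rw [h]; norm_num]
  calc ∑ u ∈ neighbours N V v, negForm N u v ^ 2 = ∑ u ∈ neighbours N V v, 1 :=
        sum_congr rfl fun u hu => by
          rcases (mem_neighbours.mp hu).2.2 with h | h <;> simp [h]
    _ = 2 := by rw [sum_const, hV.card_neighbours hv]; rfl

def negOnePairs (N : ℕ) (C : Finset (Fin N → ℤ)) : Finset ((Fin N → ℤ) × (Fin N → ℤ)) :=
  (C ×ˢ C).filter fun p => p.1 ≠ p.2 ∧ negForm N p.1 p.2 = -1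

theorem IsSemipositive.eq_of_negForm_eq_neg_one (hV : IsSemipositive N V)
    {v a b : Fin N → ℤ} (hv : v ∈ V) (ha : a ∈ V) (hb : b ∈ V) (hav : a ≠ v) (hbv : b ≠ v)
    (ha1 : negForm N a v = -1) (hb1 : negForm N b v = -1) : a = b := by
  classical
  by_contra hab
  have hvC := mem_compOf_self hv
  have haC := mem_compOf_of_negForm_ne_zero ha hvC (by rw [ha1]; norm_num)
  have hbC := mem_compOf_of_negForm_ne_zero hb hvC (by rw [hb1]; norm_num)
  have hsub : ({(a, v), (v, a), (b, v)} : Finset _) ⊆ negOnePairs N (compOf N V v) := by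
    intro p hp
    simp only [mem_insert, mem_singleton] at hp
    rcases hp with rfl | rfl | rfl <;> simp only [negOnePairs, mem_filter, mem_product]
    · exact ⟨⟨haC, hvC⟩, hav, ha1⟩
    · exact ⟨⟨hvC, haC⟩, hav.symm, by rw [negForm_comm, ha1]⟩
    · exact ⟨⟨hbC, hvC⟩, hbv, hb1⟩
  have hcard := card_le_card hsub
  have hpair : (negOnePairs N (compOf N V v)).card = 2 := hV.2 v hv
  rw [hpair, card_eq_three.mpr ⟨_, _, _, by simp [hav], by simp [hab], by simp [hbv.symm],
    rfl⟩] at hcard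
  omega

theorem IsSemipositive.sum_erase_negForm (hV : IsSemipositive N V) {v : Fin N → ℤ}
    (hv : v ∈ V) : ∑ u ∈ V.erase v, negForm N u v = 0 ∨ ∑ u ∈ V.erase v, negForm N u v = 2 := by
  classical
  obtain ⟨a, b, hab, hnb⟩ := card_eq_two.mp (hV.1.card_neighbours hv)
  rw [hV.1.sum_erase_eq_sum_neighbours hv fun u h => h, hnb, sum_pair hab]
  obtain ⟨haV, hav, ha⟩ := mem_neighbours.mp (hnb ▸ mem_insert_self a {b})
  obtain ⟨hbV, hbv, hb⟩ := mem_neighbours.mp (hnb ▸ mem_insert_of_mem (mem_singleton_self b))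
  rcases ha with ha | ha <;> rcases hb with hb | hb
  · exact Or.inr (by rw [ha, hb]; rfl)
  · exact Or.inl (by rw [ha, hb]; rfl)
  · exact Or.inl (by rw [ha, hb]; rfl)
  · exact absurd (hV.eq_of_negForm_eq_neg_one hv haV hbV hav hbv ha hb) hab

end Circular

section Coefficients

variable {N : ℕ} {E V : Finset (Fin N → ℤ)}

lemma Int.sq_sub_self_nonneg (c : ℤ) : 0 ≤ c ^ 2 - c := by
  rcases le_or_gt c 0 with h | h <;> nlinarith

lemma Int.mem_of_sq_sub_self_le_two {c : ℤ} (h : c ^ 2 - c ≤ 2) :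
    c = -1 ∨ c = 0 ∨ c = 1 ∨ c = 2 := by
  have : -1 ≤ c := by nlinarith
  have : c ≤ 2 := by nlinarith
  omega

theorem IsAdaptedBasis.negForm_cases (hV : IsSemipositive N V) (hE : IsAdaptedBasis N E V)
    {v e : Fin N → ℤ} (hv : v ∈ V) (he : e ∈ E) :
    negForm N v e = 0 ∨ negForm N v e = 1 ∨
      (negForm N (∑ u ∈ V, u) v = negForm N v v + 2 ∧
        (negForm N v e = -1 ∨ negForm N v e = 2)) := by
  have hW : negForm N (∑ u ∈ V, u) v = negForm N v v + ∑ u ∈ V.erase v, negForm N u v := by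
    rw [negForm_sum_left, ← add_sum_erase _ _ hv]
  have hsum : ∑ f ∈ E, (negForm N v f ^ 2 - negForm N v f) =
      ∑ u ∈ V.erase v, negForm N u v := by
    simp_rw [sum_sub_distrib, sq]
    rw [hE.1.sum_negForm_mul_negForm, hE.sum_negForm_basis, ← add_sum_erase _ _ hv]
    ring
  have hle := single_le_sum (fun f _ => Int.sq_sub_self_nonneg (negForm N v f)) he
  rw [hsum] at hle
  rcases hV.sum_erase_negForm hv with h | h <;> rw [h] at hle
  · rcases Int.mem_of_sq_sub_self_le_two (c := negForm N v e) (by omega) with hc | hc | hc | hc <;>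
      simp [hc] at hle ⊢
  · rcases Int.mem_of_sq_sub_self_le_two hle with hc | hc | hc | hc
    · exact Or.inr (Or.inr ⟨by rw [hW, h], Or.inl hc⟩)
    · exact Or.inl hc
    · exact Or.inr (Or.inl hc)
    · exact Or.inr (Or.inr ⟨by rw [hW, h], Or.inr hc⟩)

lemma exists_eq_one_of_sum_eq_one {α : Type*} {S : Finset α} {g : α → ℤ}
    (h01 : ∀ a ∈ S, g a = 0 ∨ g a = 1) (hsum : ∑ a ∈ S, g a = 1) :
    ∃ u ∈ S, g u = 1 ∧ ∀ w ∈ S, g w ≠ 0 → w = u := by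
  classical
  have hcard : (S.filter fun a => g a = 1).card = 1 := by
    have hbool : ∑ a ∈ S, g a = ∑ a ∈ S, if g a = 1 then 1 else 0 :=
      sum_congr rfl fun a ha => by rcases h01 a ha with h | h <;> simp [h]
    exact_mod_cast (sum_boole _ _).symm.trans (hbool.symm.trans hsum)
  obtain ⟨u, hu⟩ := card_eq_one.mp hcard
  have hmem : ∀ w, w ∈ S ∧ g w = 1 ↔ w = u := fun w => by
    simpa using congrArg (w ∈ ·) hu
  obtain ⟨huS, hu1⟩ := (hmem u).mpr rfl
  refine ⟨u, huS, hu1, fun w hw hw0 => (hmem w).mp ⟨hw, ?_⟩⟩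
  exact (h01 w hw).resolve_left hw0

end Coefficients

section Definite

variable {N : ℕ} {V : Finset (Fin N → ℤ)}

lemma sum_sum_mul_negForm {ι : Type*} (S : Finset ι) (w : ι → Fin N → ℤ) (x : ι → ℚ) :
    ∑ v ∈ S, ∑ q ∈ S, x v * x q * negForm N (w v) (w q) =
      -∑ i, (∑ v ∈ S, x v * w v i) ^ 2 := by
  simp only [negForm, Int.cast_neg, Int.cast_sum, Int.cast_mul, sq, sum_mul, mul_sum,
    mul_neg, sum_neg_distrib]
  congr 1
  calc ∑ v ∈ S, ∑ q ∈ S, ∑ i, x v * x q * (w v i * w q i)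
      = ∑ v ∈ S, ∑ i, ∑ q ∈ S, x v * x q * (w v i * w q i) :=
        sum_congr rfl fun _ _ => sum_comm
    _ = _ := sum_comm.trans (sum_congr rfl fun _ _ => sum_congr rfl fun _ _ =>
        sum_congr rfl fun _ _ => by ring)

lemma sum_sum_erase_comm {α M : Type*} [DecidableEq α] [AddCommMonoid M] (S : Finset α)
    (f : α → α → M) : ∑ v ∈ S, ∑ q ∈ S.erase v, f v q = ∑ v ∈ S, ∑ q ∈ S.erase v, f q v :=
  sum_comm' fun v q => by simp only [mem_erase]; tauto

theorem IsCircular.sum_erase_sq_negForm_cast (hV : IsCircular N V) {v : Fin N → ℤ}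
    (hv : v ∈ V) : ∑ q ∈ V.erase v, (negForm N v q : ℚ) ^ 2 = 2 := by
  simp_rw [negForm_comm v]
  exact_mod_cast hV.sum_erase_sq_negForm hv

theorem IsCircular.sum_sum_mul_negForm_eq (hV : IsCircular N V)
    {w : (Fin N → ℤ) → Fin N → ℤ}
    (hoff : ∀ v ∈ V, ∀ q ∈ V, v ≠ q → negForm N (w v) (w q) = negForm N v q)
    (x : (Fin N → ℤ) → ℚ) :
    ∑ v ∈ V, ∑ q ∈ V, x v * x q * negForm N (w v) (w q) =
      ∑ v ∈ V, (negForm N (w v) (w v) + 2) * x v ^ 2 -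
        (∑ v ∈ V, ∑ q ∈ V.erase v,
          ((negForm N v q : ℚ) * x v - (negForm N v q : ℚ) ^ 2 * x q) ^ 2) / 2 := by
  have hsplit : ∑ v ∈ V, ∑ q ∈ V, x v * x q * negForm N (w v) (w q) =
      ∑ v ∈ V, x v ^ 2 * negForm N (w v) (w v) +
        ∑ v ∈ V, ∑ q ∈ V.erase v, x v * x q * negForm N v q := by
    rw [← sum_add_distrib]
    refine sum_congr rfl fun v hv => ?_
    rw [← add_sum_erase _ _ hv, sq]
    congr 1
    exact sum_congr rfl fun q hq => by rw [hoff v hv q (mem_erase.mp hq).2 (mem_erase.mp hq).1.symm]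
  have hexpand : ∑ v ∈ V, ∑ q ∈ V.erase v,
        ((negForm N v q : ℚ) * x v - (negForm N v q : ℚ) ^ 2 * x q) ^ 2 =
      ∑ v ∈ V, ∑ q ∈ V.erase v, (negForm N v q : ℚ) ^ 2 * x v ^ 2 +
        ∑ v ∈ V, ∑ q ∈ V.erase v, (negForm N v q : ℚ) ^ 2 * x q ^ 2 -
          2 * ∑ v ∈ V, ∑ q ∈ V.erase v, x v * x q * negForm N v q := by
    simp_rw [mul_sum, ← sum_add_distrib, ← sum_sub_distrib]
    refine sum_congr rfl fun v hv => sum_congr rfl fun q hq => ?_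
    rcases hV.2.1 v hv q (mem_of_mem_erase hq) (mem_erase.mp hq).1.symm with h | h | h <;>
      · rw [h]; push_cast; ring
  have hleft : ∑ v ∈ V, ∑ q ∈ V.erase v, (negForm N v q : ℚ) ^ 2 * x v ^ 2 =
      2 * ∑ v ∈ V, x v ^ 2 := by
    rw [mul_sum]
    exact sum_congr rfl fun v hv => by rw [← sum_mul, hV.sum_erase_sq_negForm_cast hv]
  have hright : ∑ v ∈ V, ∑ q ∈ V.erase v, (negForm N v q : ℚ) ^ 2 * x q ^ 2 =
      2 * ∑ v ∈ V, x v ^ 2 := by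
    rw [sum_sum_erase_comm, mul_sum]
    refine sum_congr rfl fun v hv => ?_
    simp_rw [negForm_comm _ v]
    rw [← sum_mul, hV.sum_erase_sq_negForm_cast hv]
  have hdiag : ∑ v ∈ V, (negForm N (w v) (w v) + 2) * x v ^ 2 =
      ∑ v ∈ V, x v ^ 2 * negForm N (w v) (w v) + 2 * ∑ v ∈ V, x v ^ 2 := by
    rw [mul_sum, ← sum_add_distrib]
    exact sum_congr rfl fun _ _ => by ring
  rw [hsplit, hexpand, hleft, hright, hdiag]
  ring

def SignCompatible (N : ℕ) (V : Finset (Fin N → ℤ)) (x : (Fin N → ℤ) → ℚ) : Prop :=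
  ∀ v ∈ V, ∀ q ∈ V, v ≠ q → negForm N v q ≠ 0 → x q = negForm N v q * x v

theorem IsCircular.signCompatible_of_sum_sum_mul_negForm_eq_zero (hV : IsCircular N V)
    {w : (Fin N → ℤ) → Fin N → ℤ}
    (hoff : ∀ v ∈ V, ∀ q ∈ V, v ≠ q → negForm N (w v) (w q) = negForm N v q)
    (hdiag : ∀ v ∈ V, negForm N (w v) (w v) ≤ -2) {x : (Fin N → ℤ) → ℚ}
    (hQ : ∑ v ∈ V, ∑ q ∈ V, x v * x q * negForm N (w v) (w q) = 0) :
    SignCompatible N V x := by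
  rw [hV.sum_sum_mul_negForm_eq hoff] at hQ
  have hdiag_nonpos : ∑ v ∈ V, (negForm N (w v) (w v) + 2 : ℚ) * x v ^ 2 ≤ 0 :=
    sum_nonpos fun v hv => mul_nonpos_of_nonpos_of_nonneg
      (by exact_mod_cast (by linarith [hdiag v hv] : negForm N (w v) (w v) + 2 ≤ 0))
      (sq_nonneg _)
  have hsq_nonneg : ∀ v ∈ V, 0 ≤ ∑ q ∈ V.erase v,
      ((negForm N v q : ℚ) * x v - (negForm N v q : ℚ) ^ 2 * x q) ^ 2 :=
    fun v _ => sum_nonneg fun q _ => sq_nonneg _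
  have hsq_zero := (sum_eq_zero_iff_of_nonneg hsq_nonneg).mp (by linarith [sum_nonneg hsq_nonneg])
  intro v hv q hq hvq hvq0
  have hterm := (sum_eq_zero_iff_of_nonneg fun q _ => sq_nonneg _).mp (hsq_zero v hv) q
    (mem_erase.mpr ⟨hvq.symm, hq⟩)
  have hs : (negForm N v q : ℚ) ^ 2 = 1 := by
    rcases hV.2.1 v hv q hq hvq with h | h | h
    · rw [h]; norm_num
    · exact absurd h hvq0
    · rw [h]; norm_num
  rw [hs, one_mul, sq_eq_zero_iff, sub_eq_zero] at hterm
  exact hterm.symm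

end Definite

section Parity

variable {N : ℕ} {V : Finset (Fin N → ℤ)} {x : (Fin N → ℤ) → ℚ}

lemma even_card_of_swap_mem {α : Type*} {T : Finset (α × α)}
    (hswap : ∀ p ∈ T, p.swap ∈ T) (hne : ∀ p ∈ T, p.1 ≠ p.2) : Even T.card := by
  rw [← ZMod.natCast_eq_zero_iff_even, card_eq_sum_ones, Nat.cast_sum]
  refine sum_involution (fun p _ => p.swap) (fun _ _ => by decide) (fun p hp _ h => ?_) hswap
    fun p _ => p.swap_swap
  exact hne p hp (congrArg Prod.snd h)

lemma card_filter_fst_neg {α : Type*} {D : Finset (α × α)} {x : α → ℚ}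
    (hswap : ∀ p ∈ D, p.swap ∈ D) (hsign : ∀ p ∈ D, x p.2 = -x p.1 ∧ x p.1 ≠ 0) :
    2 * (D.filter fun p => x p.1 < 0).card = D.card := by
  have hsame : (D.filter fun p => x p.1 < 0).card = (D.filter fun p => ¬ x p.1 < 0).card := by
    refine card_nbij' Prod.swap Prod.swap (fun p hp => ?_) (fun p hp => ?_)
      (fun p _ => p.swap_swap) (fun p _ => p.swap_swap)
    · obtain ⟨hpD, hneg⟩ := mem_filter.mp hp
      refine mem_filter.mpr ⟨hswap p hpD, ?_⟩
      rw [Prod.fst_swap, (hsign p hpD).1]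
      linarith
    · obtain ⟨hpD, hpos⟩ := mem_filter.mp hp
      refine mem_filter.mpr ⟨hswap p hpD, ?_⟩
      rw [Prod.fst_swap, (hsign p hpD).1]
      have := (hsign p hpD).2
      contrapose! this
      linarith
  rw [two_mul]
  nth_rw 2 [hsame]
  exact card_filter_add_card_filter_not _

def adjPairs (N : ℕ) (S T : Finset (Fin N → ℤ)) : Finset ((Fin N → ℤ) × (Fin N → ℤ)) :=
  (S ×ˢ T).filter fun p => p.1 ≠ p.2 ∧ negForm N p.1 p.2 ≠ 0

lemma mem_adjPairs {S T : Finset (Fin N → ℤ)} {p : (Fin N → ℤ) × (Fin N → ℤ)} :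
    p ∈ adjPairs N S T ↔ p.1 ∈ S ∧ p.2 ∈ T ∧ p.1 ≠ p.2 ∧ negForm N p.1 p.2 ≠ 0 := by
  rw [adjPairs, mem_filter, mem_product, and_assoc]

theorem IsCircular.card_adjPairs (hV : IsCircular N V) {S : Finset (Fin N → ℤ)} (hS : S ⊆ V) :
    (adjPairs N S V).card = 2 * S.card := by
  rw [adjPairs, card_filter, sum_product, mul_comm, ← smul_eq_mul, ← sum_const]
  refine sum_congr rfl fun v hv => ?_
  rw [← card_filter, ← hV.card_neighbours (hS hv)]
  congr 1
  refine filter_congr fun q hq => ?_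
  rw [negForm_comm, ne_comm]
  constructor
  · rintro ⟨hqv, h0⟩
    rcases hV.2.1 q hq v (hS hv) hqv with h | h | h
    exacts [⟨hqv, Or.inr h⟩, absurd h h0, ⟨hqv, Or.inl h⟩]
  · rintro ⟨hqv, h | h⟩ <;> exact ⟨hqv, by rw [h]; norm_num⟩

lemma SignCompatible.abs_eq_of_conn (hV : IsCircular N V) (hx : SignCompatible N V x)
    {a b : Fin N → ℤ} (h : Conn N V a b) : |x a| = |x b| := by
  induction h with
  | rel a b hab =>
    obtain ⟨ha, hb, hab0⟩ := hab
    rcases eq_or_ne a b with rfl | hne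
    · rfl
    · rw [hx a ha b hb hne hab0, abs_mul]
      rcases hV.2.1 a ha b hb hne with h | h | h <;> simp_all
  | refl => rfl
  | symm _ _ _ ih => exact ih.symm
  | trans _ _ _ _ _ ih₁ ih₂ => exact ih₁.trans ih₂

lemma SignCompatible.ne_zero_of_mem_compOf (hV : IsCircular N V) (hx : SignCompatible N V x)
    {v₀ v : Fin N → ℤ} (hv₀ : x v₀ ≠ 0) (hv : v ∈ compOf N V v₀) : x v ≠ 0 := by
  classical
  rw [← abs_ne_zero, hx.abs_eq_of_conn hV (mem_filter.mp hv).2, abs_ne_zero]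
  exact hv₀

lemma SignCompatible.eq_or_eq_neg (hV : IsCircular N V) (hx : SignCompatible N V x)
    {p : (Fin N → ℤ) × (Fin N → ℤ)} (hp : p ∈ adjPairs N V V) :
    (negForm N p.1 p.2 = 1 ∧ x p.2 = x p.1) ∨ (negForm N p.1 p.2 = -1 ∧ x p.2 = -x p.1) := by
  obtain ⟨h1, h2, hne, h0⟩ := mem_adjPairs.mp hp
  rw [hx p.1 h1 p.2 h2 hne h0]
  rcases hV.2.1 p.1 h1 p.2 h2 hne with h | h | h
  · exact Or.inr ⟨h, by rw [h]; push_cast; ring⟩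
  · exact absurd h h0
  · exact Or.inl ⟨h, by rw [h]; push_cast; ring⟩

lemma negOnePairs_subset_adjPairs {C : Finset (Fin N → ℤ)} (hCV : C ⊆ V) :
    negOnePairs N C ⊆ adjPairs N V V := fun p hp => by
  obtain ⟨h12, hne, h⟩ := mem_filter.mp hp
  exact mem_adjPairs.mpr ⟨hCV (mem_product.mp h12).1, hCV (mem_product.mp h12).2, hne,
    by rw [h]; norm_num⟩

lemma SignCompatible.filter_adjPairs_not_neg (hx : SignCompatible N V x) (hV : IsCircular N V)
    {C : Finset (Fin N → ℤ)} (hCV : C ⊆ V)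
    (hC : ∀ v ∈ C, ∀ q ∈ V, negForm N v q ≠ 0 → q ∈ C) :
    (adjPairs N (C.filter fun v => x v < 0) V).filter (fun p => ¬ x p.2 < 0) =
      (negOnePairs N C).filter fun p => x p.1 < 0 := by
  ext p
  simp only [mem_filter, mem_adjPairs, negOnePairs, mem_product]
  have hflip := fun h => hx.eq_or_eq_neg hV (p := p) (mem_adjPairs.mpr h)
  constructor
  · rintro ⟨⟨⟨h1C, h1⟩, h2V, hne, h0⟩, h2⟩
    rcases hflip ⟨hCV h1C, h2V, hne, h0⟩ with ⟨-, h⟩ | ⟨h, -⟩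
    · exact absurd (h ▸ h1) h2
    · exact ⟨⟨⟨h1C, hC _ h1C _ h2V h0⟩, hne, h⟩, h1⟩
  · rintro ⟨⟨⟨h1C, h2C⟩, hne, h⟩, h1⟩
    have h0 : negForm N p.1 p.2 ≠ 0 := by rw [h]; norm_num
    refine ⟨⟨⟨h1C, h1⟩, hCV h2C, hne, h0⟩, ?_⟩
    rcases hflip ⟨hCV h1C, hCV h2C, hne, h0⟩ with ⟨h', -⟩ | ⟨-, h'⟩
    · rw [h] at h'; norm_num at h'
    · rw [h']; linarith

lemma even_card_filter_adjPairs_neg {C : Finset (Fin N → ℤ)} (hCV : C ⊆ V)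
    (hC : ∀ v ∈ C, ∀ q ∈ V, negForm N v q ≠ 0 → q ∈ C) :
    Even ((adjPairs N (C.filter fun v => x v < 0) V).filter fun p => x p.2 < 0).card := by
  refine even_card_of_swap_mem (fun p hp => ?_) fun p hp =>
    (mem_adjPairs.mp (mem_filter.mp hp).1).2.2.1
  simp only [mem_filter, mem_adjPairs] at hp ⊢
  obtain ⟨⟨⟨h1C, h1⟩, h2V, hne, h0⟩, h2⟩ := hp
  exact ⟨⟨⟨hC _ h1C _ h2V h0, h2⟩, hCV h1C, hne.symm, by rwa [negForm_comm]⟩, h1⟩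

lemma SignCompatible.two_mul_card_filter_negOnePairs (hx : SignCompatible N V x)
    (hV : IsCircular N V) {C : Finset (Fin N → ℤ)} (hCV : C ⊆ V) (hxC : ∀ v ∈ C, x v ≠ 0) :
    2 * ((negOnePairs N C).filter fun p => x p.1 < 0).card = (negOnePairs N C).card := by
  refine card_filter_fst_neg (fun p hp => ?_) (fun p hp => ?_)
  · obtain ⟨h12, hne, h⟩ := mem_filter.mp hp
    exact mem_filter.mpr ⟨mem_product.mpr (mem_product.mp h12).symm, hne.symm,
      by rwa [negForm_comm]⟩
  · refine ⟨?_, hxC p.1 (mem_product.mp (mem_filter.mp hp).1).1⟩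
    rcases hx.eq_or_eq_neg hV (negOnePairs_subset_adjPairs hCV hp) with ⟨h, -⟩ | ⟨-, h⟩
    · rw [(mem_filter.mp hp).2.2] at h; norm_num at h
    · exact h

/-- Along an edge the sign of `x` flips iff `v·q = -1`. Counting the edges leaving
`{x < 0}` inside the component of `v₀` gives `2 #{x < 0} - (even) = 1`. -/
theorem IsSemipositive.eq_zero_of_signCompatible (hV : IsSemipositive N V)
    (hx : SignCompatible N V x) : ∀ v ∈ V, x v = 0 := by
  classical
  by_contra! ⟨v₀, hv₀, hx₀⟩
  set C := compOf N V v₀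
  have hCV : C ⊆ V := fun v hv => (mem_filter.mp hv).1
  have hC : ∀ v ∈ C, ∀ q ∈ V, negForm N v q ≠ 0 → q ∈ C := fun v hv q hq h =>
    mem_compOf_of_negForm_ne_zero hq hv (by rwa [negForm_comm])
  have hcount := hV.1.card_adjPairs ((filter_subset (fun v => x v < 0) C).trans hCV)
  rw [← card_filter_add_card_filter_not (fun p => x p.2 < 0),
    hx.filter_adjPairs_not_neg hV.1 hCV hC] at hcount
  have hodd := hx.two_mul_card_filter_negOnePairs hV.1 hCV
    fun v hv => hx.ne_zero_of_mem_compOf hV.1 hx₀ hv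
  obtain ⟨k, hk⟩ := even_card_filter_adjPairs_neg (x := x) hCV hC
  have hpair : (negOnePairs N C).card = 2 := hV.2 v₀ hv₀
  omega

end Parity

section Independence

variable {N : ℕ} {V : Finset (Fin N → ℤ)}

theorem IsSemipositive.linearIndepOn (hV : IsSemipositive N V) {w : (Fin N → ℤ) → Fin N → ℤ}
    (hoff : ∀ v ∈ V, ∀ q ∈ V, v ≠ q → negForm N (w v) (w q) = negForm N v q)
    (hdiag : ∀ v ∈ V, negForm N (w v) (w v) ≤ -2) :
    LinearIndepOn ℚ (fun v i => (w v i : ℚ)) (V : Set (Fin N → ℤ)) := by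
  rw [linearIndepOn_finset_iff]
  intro x hx
  refine hV.eq_zero_of_signCompatible
    (hV.1.signCompatible_of_sum_sum_mul_negForm_eq_zero hoff hdiag ?_)
  rw [sum_sum_mul_negForm, neg_eq_zero]
  refine sum_eq_zero fun i _ => ?_
  have hi := congrFun hx i
  simp only [Finset.sum_apply, Pi.smul_apply, smul_eq_mul, Pi.zero_apply] at hi
  rw [hi, sq, mul_zero]

lemma card_lt_of_linearIndependent_of_apply_eq_zero {K ι : Type*} [Field K] [Fintype ι]
    {b : ι → Fin N → K} (hb : LinearIndependent K b) (j : Fin N) (hj : ∀ i, b i j = 0) :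
    Fintype.card ι < N := by
  set H := LinearMap.ker (LinearMap.proj j : (Fin N → K) →ₗ[K] K)
  have hle : Submodule.span K (Set.range b) ≤ H :=
    Submodule.span_le.mpr (by rintro _ ⟨i, rfl⟩; exact hj i)
  have hne : H ≠ ⊤ := fun h => by
    have hmem : Pi.single j 1 ∈ H := h ▸ Submodule.mem_top
    simp [H] at hmem
  calc Fintype.card ι = Module.finrank K (Submodule.span K (Set.range b)) :=
        (finrank_span_eq_card hb).symm
    _ ≤ Module.finrank K H := Submodule.finrank_mono hle
    _ < Module.finrank K (Fin N → K) := Submodule.finrank_lt hne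
    _ = N := by simp

theorem IsSemipositive.card_lt (hV : IsSemipositive N V) {w : (Fin N → ℤ) → Fin N → ℤ}
    (hoff : ∀ v ∈ V, ∀ q ∈ V, v ≠ q → negForm N (w v) (w q) = negForm N v q)
    (hdiag : ∀ v ∈ V, negForm N (w v) (w v) ≤ -2) {e : Fin N → ℤ} (he : negForm N e e = -1)
    (hwe : ∀ v ∈ V, negForm N (w v) e = 0) : V.card < N := by
  obtain ⟨j, c, hc, rfl⟩ := eq_single_of_negForm_self_eq_neg_one he
  have hwj : ∀ v ∈ V, w v j = 0 := fun v hv => by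
    have h := hwe v hv
    rw [negForm_single_right] at h
    rcases hc with rfl | rfl <;> linarith
  have hcard := card_lt_of_linearIndependent_of_apply_eq_zero
    (hV.linearIndepOn hoff hdiag).linearIndependent j fun v => by simp [hwj v v.2]
  simpa only [Finset.coe_sort_coe, Fintype.card_coe] using hcard

theorem IsSemipositive.negForm_self_eq_neg_two (hV : IsSemipositive N V) (hN : N = V.card)
    (hsq : ∀ v ∈ V, negForm N v v ≤ -2) {e u : Fin N → ℤ} (he : negForm N e e = -1)
    (hu : u ∈ V) (hue : negForm N u e = 1) (hperp : ∀ w ∈ V, negForm N w e ≠ 0 → w = u) :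
    negForm N u u = -2 := by
  refine le_antisymm (hsq u hu) (not_lt.mp fun hlt => ?_)
  have hperp' : ∀ v ∈ V, v ≠ u → negForm N v e = 0 := fun v hv hvu => by
    by_contra h; exact hvu (hperp v hv h)
  set w : (Fin N → ℤ) → Fin N → ℤ := fun v => if v = u then u + e else v
  have hwe : ∀ v ∈ V, negForm N (w v) e = 0 := fun v hv => by
    by_cases hvu : v = u
    · simp only [w, if_pos hvu, negForm_add_left, hue, he, add_neg_cancel]
    · simp only [w, if_neg hvu, hperp' v hv hvu]
  have hoff : ∀ v ∈ V, ∀ q ∈ V, v ≠ q → negForm N (w v) (w q) = negForm N v q := by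
    intro v hv q hq hvq
    rcases eq_or_ne v u with rfl | hvu
    · simp only [w, if_pos, if_neg hvq.symm, negForm_add_left, negForm_comm e,
        hperp' q hq hvq.symm, add_zero]
    rcases eq_or_ne q u with rfl | hqu
    · simp only [w, if_pos, if_neg hvu]
      rw [negForm_comm, negForm_add_left, negForm_comm e, hperp' v hv hvu, add_zero,
        negForm_comm]
    · simp only [w, if_neg hvu, if_neg hqu]
  have hdiag : ∀ v ∈ V, negForm N (w v) (w v) ≤ -2 := fun v hv => by
    by_cases hvu : v = u
    · simp only [w, if_pos hvu, negForm_add_self, hue, he]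
      omega
    · simp only [w, if_neg hvu]
      exact hsq v hv
  exact (hV.card_lt hoff hdiag he hwe).ne hN.symm

end Independence

theorem stmt_10_general (N : ℕ) (V E : Finset (Fin N → ℤ)) (hN : N = V.card)
    (hsemi : IsSemipositive N V)
    (hsq : ∀ v ∈ V, negForm N v v ≤ -2)
    (hE : IsAdaptedBasis N E V) :
    ∀ e ∈ E,
      (∀ v ∈ V, negForm N (∑ u ∈ V, u) v = negForm N v v + 2 →
        ¬(negForm N v e = -1 ∨ negForm N v e = 2)) →
      ∃ u ∈ V, negForm N u u = -2 ∧ negForm N u e = 1 ∧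
        ∀ w ∈ V, negForm N w e ≠ 0 → w = u := by
  intro e he hcoef
  have h01 : ∀ v ∈ V, negForm N v e = 0 ∨ negForm N v e = 1 := fun v hv => by
    rcases hE.negForm_cases hsemi hv he with h | h | ⟨hW, hc⟩
    exacts [Or.inl h, Or.inr h, (hcoef v hv hW hc).elim]
  obtain ⟨u, hu, hue, huniq⟩ := exists_eq_one_of_sum_eq_one h01 (hE.sum_negForm_eq_one he)
  exact ⟨u, hu, hsemi.negForm_self_eq_neg_two hN hsq (hE.1.2.1 e he) hu hue huniq, hue, huniq⟩

/-- for a semipositive circular subset `V ⊂ ℤ^{|V|}` with squares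
`≤ -2` and component sums `< -1`, every `e ∈ E` not in the image of the
coefficient map is hit by a unique element `u ∈ V`, which satisfies `u·u = -2`
and `u·e = 1`. -/
theorem stmt_10 (N : ℕ) (V E : Finset (Fin N → ℤ)) (hN : N = V.card)
    (hsemi : IsSemipositive N V)
    (hsq : ∀ v ∈ V, negForm N v v ≤ -2)
    (hcomp : ∀ v ∈ V, (∑ u ∈ compOf N V v, (negForm N u u + 2)) < -1)
    (hE : IsAdaptedBasis N E V) :
    ∀ e ∈ E,
      (∀ v ∈ V, negForm N (∑ u ∈ V, u) v = negForm N v v + 2 →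
        ¬(negForm N v e = -1 ∨ negForm N v e = 2)) →
      ∃ u ∈ V, negForm N u u = -2 ∧ negForm N u e = 1 ∧
        ∀ w ∈ V, negForm N w e ≠ 0 → w = u :=
  stmt_10_general N V E hN hsemi hsq hE
end

section
/- If (s_1,…,s_n) ∈ N_0^n is obtained from (0,0) by a sequence of at least one blowup, then at least two entries of (s_1,…,s_n) are equal to 1. -/
open Finset

/-!
Read a string cyclically: each of the three kinds of blowup inserts a `1` between two
cyclically adjacent entries and raises both of them by one. After the first blowup the
string has a `1` outside every pair of cyclically adjacent positions: a later blowup only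
changes the two entries of one such pair, and the pairs it creates next to the new `1`
still miss the `1` that lay off the old pair. The new `1` together with the `1` off one
of its pairs gives the two ones.
-/

theorem List.IsRotated.head_mem_or {α : Type*} {a x y : α} {m u : List α}
    (h : a :: m ~r x :: y :: u) :
    a ∈ u ∨ (x = a ∧ y :: u = m) ∨ (y = a ∧ m = u ++ [x]) := by
  obtain ⟨n, hn, hrot⟩ := isRotated_iff_mod.mp h
  have hpq := (take_append_drop n (a :: m)).symm
  rw [rotate_eq_drop_append_take hn] at hrot
  generalize take n (a :: m) = p at hpq hrot
  generalize drop n (a :: m) = q at hpq hrot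
  rcases p with _ | ⟨_, p⟩
  · simp_all
  obtain ⟨rfl, rfl⟩ := List.cons_eq_cons.mp hpq
  match q, hrot with
  | [], hrot => simp_all
  | [_], hrot => simp_all
  | _ :: _ :: q, hrot =>
    simp only [cons_append, cons.injEq] at hrot
    simp [← hrot.2.2]

/-- Viewing `l` cyclically, no two adjacent entries carry all the `1`s of `l`. -/
def OneOffEveryEdge (l : List ℕ) : Prop :=
  ∀ x y u, l ~r x :: y :: u → 1 ∈ u

theorem oneOffEveryEdge_of_isRotated {l t : List ℕ} {c d : ℕ}
    (hl : l ~r c :: 1 :: d :: t) (hc : 1 ∈ t ++ [c]) (hd : 1 ∈ d :: t) :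
    OneOffEveryEdge l := by
  intro x y u hu
  have hrot : 1 :: (d :: t ++ [c]) ~r x :: y :: u :=
    (List.IsRotated.cons_append_singleton (l := 1 :: d :: t)).symm.trans (hl.symm.trans hu)
  rcases hrot.head_mem_or with h | ⟨-, hu'⟩ | ⟨-, hu'⟩
  · exact h
  · simp_all
  · rwa [(List.append_inj' hu' rfl).1] at hd

theorem IsBlowup.exists_isRotated {s z : List ℕ} (h : IsBlowup s z) :
    ∃ a b t, s ~r a :: b :: t ∧ z ~r (a + 1) :: 1 :: (b + 1) :: t := by
  cases h with
  | left a b m =>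
    exact ⟨b, a, m, List.isRotated_concat b (a :: m),
      List.isRotated_concat (b + 1) (1 :: (a + 1) :: m)⟩
  | middle a b p s => exact ⟨a, b, s ++ p, List.isRotated_append, List.isRotated_append⟩
  | right a b m =>
    exact ⟨b, a, m, List.isRotated_concat b (a :: m),
      List.isRotated_append (l := (a + 1) :: m) (l' := [b + 1, 1])⟩

theorem IsBlowup.oneOffEveryEdge {s z : List ℕ} (h : IsBlowup s z)
    (hs : ∀ a b t, s ~r a :: b :: t → 1 ∈ t ∨ a = 0 ∧ b = 0) : OneOffEveryEdge z := by
  obtain ⟨a, b, t, hs', hz⟩ := h.exists_isRotated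
  rcases hs a b t hs' with h1 | ⟨rfl, rfl⟩
  · exact oneOffEveryEdge_of_isRotated hz (by simp [h1]) (by simp [h1])
  · exact oneOffEveryEdge_of_isRotated hz (by simp) (by simp)

theorem oneOffEveryEdge_of_transGen {z : List ℕ} (h : Relation.TransGen IsBlowup [0, 0] z) :
    OneOffEveryEdge z := by
  induction h with
  | single h =>
    refine h.oneOffEveryEdge fun a b t hr => Or.inr ⟨?_, ?_⟩ <;>
      simpa using hr.symm.mem_iff.mp (by simp)
  | tail _ h ih => exact h.oneOffEveryEdge fun a b t hr => Or.inl (ih a b t hr)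

/-- a string obtained from `(0,0)` by at least one blowup has at
least two entries equal to `1`. -/
theorem stmt_18 (s z : List ℕ) (hs : IsIteratedBlowup s) (h : IsBlowup s z) :
    2 ≤ z.count 1 := by
  obtain ⟨a, b, t, -, hz⟩ := h.exists_isRotated
  have hz' : z ~r 1 :: (b + 1) :: (t ++ [a + 1]) :=
    hz.trans (List.IsRotated.cons_append_singleton (l := 1 :: (b + 1) :: t))
  have hone : 1 ∈ t ++ [a + 1] := oneOffEveryEdge_of_transGen (.tail' hs h) _ _ _ hz'
  rw [hz'.perm.count_eq, List.count_cons_self]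
  have := List.count_pos_iff.mpr (List.mem_cons_of_mem (b + 1) hone)
  omega
end
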